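/- Let M, N ⊆ ℝⁿ be convex polytopes with nonempty interior and φ : U → V a C¹-diffeomorphism between relatively open subsets U ⊆ M, V ⊆ N. Then for each x ∈ U, φ'(x)(E(x)) = F(φ(x)), where E(x) = span(M(x) − x) and F(y) = span(N(y) − y) for the smallest faces M(x), N(y) containing x resp. y. In particular dim E(x) = dim F(φ(x)). -/

import Mathlib

open Set

/-- A convex polytope: the convex hull of a finite set. -/
def IsPolytope (n : ℕ) (M : Set (Fin n → ℝ)) : Prop :=
  ∃ S : Finset (Fin n → ℝ), M = convexHull ℝ (S : Set (Fin n → ℝ))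

/-- A face of `M`: a convex extreme subset of `M`. -/
def IsFaceOf (n : ℕ) (M F : Set (Fin n → ℝ)) : Prop :=
  Convex ℝ F ∧ IsExtreme ℝ M F

/-- The smallest face of `M` containing `x`: the intersection of all faces containing `x`. -/
def smallestFace (n : ℕ) (M : Set (Fin n → ℝ)) (x : Fin n → ℝ) : Set (Fin n → ℝ) :=
  ⋂₀ {F | IsFaceOf n M F ∧ x ∈ F}

/-- `E(x) := span_ℝ (M(x) - x)`, where `M(x)` is the smallest face of `M` containing `x`. -/
def spanAt (n : ℕ) (M : Set (Fin n → ℝ)) (x : Fin n → ℝ) : Submodule ℝ (Fin n → ℝ) :=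
  Submodule.span ℝ ((fun y => y - x) '' smallestFace n M x)

/-- dimension of a set: the dimension of its affine hull. -/
noncomputable def setDim (n : ℕ) (F : Set (Fin n → ℝ)) : ℕ :=
  Module.finrank ℝ (vectorSpan ℝ F)

/-- The stratum `∂_i(M)` of points of index `i`, i.e. whose smallest containing face
has dimension `n - i`. -/
def stratum (n : ℕ) (M : Set (Fin n → ℝ)) (i : ℕ) : Set (Fin n → ℝ) :=
  {x ∈ M | setDim n (smallestFace n M x) = n - i}

/-!
For convex `M ∋ x`, `E(x)` is the lineality space of the cone of feasible directions
`{v | x + t • v ∈ M for some t > 0}`. A map that is `C¹` up to the boundary is differentiable within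
`M` at boundary points, so `φ'(x)` sends feasible directions of `M` at `x` to limits of feasible
directions of `N` at `φ x`. For a polytope the feasible cone is finitely generated, hence closed by
the conic Carathéodory theorem, so `φ'(x)` maps `E(x)` into `F(φ x)`; symmetrically for `ψ`. By the
chain rule, and uniqueness of derivatives on convex bodies, `φ'(x)` and `ψ'(φ x)` are mutually
inverse, which upgrades the two inclusions to an equality.
-/

open Filter Topology

namespace PointedCone

section Caratheodory

variable {E : Type*} [AddCommGroup E] [Module ℝ E]

theorem mem_hull_finset_iff {T : Finset E} {w : E} :
    w ∈ hull ℝ (T : Set E) ↔ ∃ c : E → ℝ, (∀ z ∈ T, 0 ≤ c z) ∧ ∑ z ∈ T, c z • z = w := by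
  constructor
  · intro hw
    obtain ⟨c, -, hc⟩ := Submodule.mem_span_finset.1 hw
    exact ⟨fun z => c z, fun z _ => (c z).2, hc⟩
  · rintro ⟨c, hc, rfl⟩
    exact Submodule.sum_mem _ fun z hz => smul_mem _ (hc z hz) (subset_hull hz)

/-- Subtract from the coefficients of `w` the largest multiple of the relation `g` that keeps
them nonnegative; one of them becomes zero. -/
theorem exists_mem_hull_erase_of_sum_smul_eq_zero [DecidableEq E] {T : Finset E} {g : E → ℝ}
    (hg : ∑ z ∈ T, g z • z = 0) {i : E} (hi : i ∈ T) (hgi : 0 < g i) {w : E}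
    (hw : w ∈ hull ℝ (T : Set E)) : ∃ z ∈ T, w ∈ hull ℝ (T.erase z : Set E) := by
  obtain ⟨c, hc, rfl⟩ := mem_hull_finset_iff.1 hw
  obtain ⟨z₀, hz₀, hmin⟩ := Finset.exists_min_image (T.filter fun z => 0 < g z)
    (fun z => c z / g z) ⟨i, Finset.mem_filter.2 ⟨hi, hgi⟩⟩
  obtain ⟨hz₀T, hgz₀⟩ := Finset.mem_filter.1 hz₀
  set r := c z₀ / g z₀
  have hc' : ∀ z ∈ T, 0 ≤ c z - r * g z := by
    intro z hz
    rcases le_or_gt (g z) 0 with hgz | hgz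
    · nlinarith [hc z hz, div_nonneg (hc z₀ hz₀T) hgz₀.le]
    · have := (le_div_iff₀ hgz).1 (hmin z (Finset.mem_filter.2 ⟨hz, hgz⟩))
      linarith
  have hz₀zero : c z₀ - r * g z₀ = 0 := by simp [r, hgz₀.ne']
  refine ⟨z₀, hz₀T, mem_hull_finset_iff.2 ⟨fun z => c z - r * g z,
    fun z hz => hc' z (Finset.mem_of_mem_erase hz), ?_⟩⟩
  rw [Finset.sum_erase _ (by simp only [hz₀zero, zero_smul])]
  simp only [sub_smul, mul_smul, Finset.sum_sub_distrib, ← Finset.smul_sum, hg, smul_zero,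
    sub_zero]

theorem exists_mem_hull_erase_of_not_linearIndepOn [DecidableEq E] {T : Finset E}
    (hT : ¬LinearIndepOn ℝ id (T : Set E)) {w : E} (hw : w ∈ hull ℝ (T : Set E)) :
    ∃ z ∈ T, w ∈ hull ℝ (T.erase z : Set E) := by
  obtain ⟨g, hg, i, hi, hgi⟩ := not_linearIndepOn_finset_iff.1 hT
  rcases hgi.lt_or_gt with hneg | hpos
  · refine exists_mem_hull_erase_of_sum_smul_eq_zero (g := -g) ?_ hi (by simpa using hneg) hw
    simpa [neg_smul] using hg
  · exact exists_mem_hull_erase_of_sum_smul_eq_zero hg hi hpos hw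

theorem exists_linearIndepOn_subset_of_mem_hull (T : Finset E) {w : E}
    (hw : w ∈ hull ℝ (T : Set E)) :
    ∃ T' ⊆ T, LinearIndepOn ℝ id (T' : Set E) ∧ w ∈ hull ℝ (T' : Set E) := by
  classical
  induction T using Finset.strongInduction with
  | H T ih =>
    by_cases hT : LinearIndepOn ℝ id (T : Set E)
    · exact ⟨T, subset_rfl, hT, hw⟩
    obtain ⟨z, hz, hwz⟩ := exists_mem_hull_erase_of_not_linearIndepOn hT hw
    obtain ⟨T', hT'z, hli, hwT'⟩ := ih _ (Finset.erase_ssubset hz) hwz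
    exact ⟨T', hT'z.trans (Finset.erase_subset z T), hli, hwT'⟩

end Caratheodory

variable {E : Type*} [AddCommGroup E] [Module ℝ E] [TopologicalSpace E] [IsTopologicalAddGroup E]
  [ContinuousSMul ℝ E] [T2Space E]

theorem isClosed_hull_of_linearIndepOn {T : Finset E} (hT : LinearIndepOn ℝ id (T : Set E)) :
    IsClosed (hull ℝ (T : Set E) : Set E) := by
  let f := Fintype.linearCombination ℝ (fun z : T => (z : E))
  have hf : LinearMap.ker f = ⊥ := LinearMap.ker_eq_bot.2 hT.fintypeLinearCombination_injective
  have himage : (hull ℝ (T : Set E) : Set E) = f '' Ici 0 := by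
    ext w
    constructor
    · intro hw
      obtain ⟨c, hc, rfl⟩ := mem_hull_finset_iff.1 hw
      refine ⟨fun z => c z, fun z => hc z z.2, ?_⟩
      rw [Fintype.linearCombination_apply, Finset.sum_coe_sort T (fun z => c z • z)]
    · rintro ⟨c, hc, rfl⟩
      rw [Fintype.linearCombination_apply]
      exact Submodule.sum_mem _ fun z _ => smul_mem _ (hc z) (subset_hull z.2)
  rw [himage]
  exact (LinearMap.isClosedEmbedding_of_injective hf).isClosedMap _ isClosed_Ici

theorem isClosed_hull_finset (T : Finset E) : IsClosed (hull ℝ (T : Set E) : Set E) := by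
  classical
  have hunion : (hull ℝ (T : Set E) : Set E) =
      ⋃ (T' : Finset E) (_ : T' ∈ T.powerset.filter fun T' : Finset E =>
        LinearIndepOn ℝ id (T' : Set E)), (hull ℝ (T' : Set E) : Set E) := by
    ext w
    simp only [mem_iUnion, Finset.mem_filter, Finset.mem_powerset, SetLike.mem_coe, exists_prop]
    constructor
    · intro hw
      obtain ⟨T', hT'T, hli, hwT'⟩ := exists_linearIndepOn_subset_of_mem_hull T hw
      exact ⟨T', ⟨hT'T, hli⟩, hwT'⟩
    · rintro ⟨T', ⟨hT'T, -⟩, hwT'⟩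
      exact Submodule.span_mono (Finset.coe_subset.2 hT'T) hwT'
  rw [hunion]
  exact isClosed_biUnion_finset fun T' hT' =>
    isClosed_hull_of_linearIndepOn (Finset.mem_filter.1 hT').2

end PointedCone

section FeasibleCone

variable {E : Type*} [AddCommGroup E] [Module ℝ E] {P : Set E} {x : E}

def feasibleCone (hP : Convex ℝ P) (hx : x ∈ P) : PointedCone ℝ E where
  carrier := {v | ∃ t : ℝ, 0 < t ∧ x + t • v ∈ P}
  zero_mem' := ⟨1, one_pos, by simpa using hx⟩
  add_mem' := by
    rintro v w ⟨a, ha, hav⟩ ⟨b, hb, hbw⟩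
    refine ⟨a * b / (a + b), by positivity, ?_⟩
    convert hP hav hbw (a := b / (a + b)) (b := a / (a + b)) (by positivity) (by positivity)
      (by field_simp; ring) using 1
    match_scalars <;> field_simp; ring
  smul_mem' := by
    rintro ⟨c, hc⟩ v ⟨t, ht, htv⟩
    rcases hc.eq_or_lt with rfl | hc
    · exact ⟨1, one_pos, by simpa using hx⟩
    refine ⟨t / c, by positivity, ?_⟩
    rwa [Nonneg.mk_smul, smul_smul, div_mul_cancel₀ t hc.ne']

theorem sub_mem_feasibleCone (hP : Convex ℝ P) (hx : x ∈ P) {y : E} (hy : y ∈ P) :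
    y - x ∈ feasibleCone hP hx :=
  ⟨1, one_pos, by simpa using hy⟩

theorem sub_mem_feasibleCone_of_mem_openSegment (hP : Convex ℝ P) (hx : x ∈ P) {u w y : E}
    (hw : w ∈ P) (hy : x - y ∈ feasibleCone hP hx) (hseg : y ∈ openSegment ℝ u w) :
    x - u ∈ feasibleCone hP hx := by
  obtain ⟨a, b, ha, hb, hab, rfl⟩ := hseg
  have key : x - u = (1 + b / a) • (x - (a • u + b • w)) + (b / a) • (w - x) := by
    obtain rfl : b = 1 - a := by linarith
    match_scalars <;> field_simp <;> ring
  rw [key]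
  exact add_mem (PointedCone.smul_mem _ (by positivity) hy)
    (PointedCone.smul_mem _ (by positivity) (sub_mem_feasibleCone hP hx hw))

theorem feasibleCone_convexHull {S : Finset E} {y : E} (hy : y ∈ convexHull ℝ (S : Set E)) :
    feasibleCone (convex_convexHull ℝ _) hy = PointedCone.hull ℝ ((· - y) '' (S : Set E)) := by
  refine le_antisymm ?_ (Submodule.span_le.2 ?_)
  · rintro v ⟨t, ht, hv⟩
    obtain ⟨w, hw₀, hw₁, hwv⟩ := Finset.mem_convexHull'.1 hv
    have key : v = ∑ s ∈ S, (t⁻¹ * w s) • (s - y) := by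
      simp only [mul_smul, smul_sub, ← Finset.smul_sum, Finset.sum_sub_distrib, ← Finset.sum_smul,
        hw₁, hwv, one_smul, smul_add, add_sub_cancel_left, inv_smul_smul₀ ht.ne']
    rw [key]
    exact Submodule.sum_mem _ fun s hs => PointedCone.smul_mem _
      (mul_nonneg (inv_nonneg.2 ht.le) (hw₀ s hs)) (PointedCone.subset_hull ⟨s, hs, rfl⟩)
  · rintro _ ⟨s, hs, rfl⟩
    exact sub_mem_feasibleCone _ hy (subset_convexHull ℝ _ hs)

theorem isClosed_feasibleCone_convexHull [TopologicalSpace E] [IsTopologicalAddGroup E]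
    [ContinuousSMul ℝ E] [T2Space E] {S : Finset E} {y : E} (hy : y ∈ convexHull ℝ (S : Set E)) :
    IsClosed (feasibleCone (convex_convexHull ℝ _) hy : Set E) := by
  classical
  rw [feasibleCone_convexHull, ← Finset.coe_image]
  exact PointedCone.isClosed_hull_finset _

end FeasibleCone

section Differential

variable {E F : Type*} [NormedAddCommGroup E] [NormedSpace ℝ E]
  [NormedAddCommGroup F] [NormedSpace ℝ F] {f : E → F} {f' : E →L[ℝ] F} {s : Set E} {t : Set F}
  {x : E}

theorem HasFDerivWithinAt.mem_feasibleCone (hf : HasFDerivWithinAt f f' s x) (hs : Convex ℝ s)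
    (hx : x ∈ s) (ht : Convex ℝ t) (hfx : f x ∈ t) (hst : ∀ᶠ y in 𝓝[s] x, f y ∈ t)
    (hcl : IsClosed (feasibleCone ht hfx : Set F)) {v : E} (hv : v ∈ feasibleCone hs hx) :
    f' v ∈ feasibleCone ht hfx := by
  obtain ⟨a, ha, hav⟩ := hv
  have hray : ∀ᶠ τ in 𝓝[>] (0 : ℝ), x + τ • v ∈ s := by
    filter_upwards [Ioo_mem_nhdsGT ha] with τ hτ
    have := hs.add_smul_mem hx hav ⟨div_nonneg hτ.1.le ha.le, (div_le_one ha).2 hτ.2.le⟩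
    rwa [smul_smul, div_mul_cancel₀ τ ha.ne'] at this
  have hd : Tendsto (fun τ : ℝ => τ • v) (𝓝[>] 0) (𝓝 0) := by
    refine tendsto_nhdsWithin_of_tendsto_nhds ?_
    simpa using (continuous_id.smul continuous_const).tendsto (0 : ℝ) (f := fun τ : ℝ => τ • v)
  have hcd : Tendsto (fun τ : ℝ => τ⁻¹ • τ • v) (𝓝[>] 0) (𝓝 v) := by
    refine tendsto_const_nhds.congr' ?_
    filter_upwards [self_mem_nhdsWithin] with τ (hτ : 0 < τ)
    rw [inv_smul_smul₀ hτ.ne']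
  have harg : Tendsto (fun τ : ℝ => x + τ • v) (𝓝[>] 0) (𝓝[s] x) :=
    tendsto_nhdsWithin_iff.2 ⟨by simpa using tendsto_const_nhds.add hd, hray⟩
  refine hcl.mem_of_tendsto (hf.lim hd hray hcd) ?_
  filter_upwards [harg.eventually hst, self_mem_nhdsWithin] with τ hτ (hτpos : 0 < τ)
  exact ⟨τ, hτpos, by rwa [smul_inv_smul₀ hτpos.ne', add_sub_cancel]⟩

theorem HasFDerivWithinAt.map_lineal_feasibleCone_le (hf : HasFDerivWithinAt f f' s x)
    (hs : Convex ℝ s) (hx : x ∈ s) (ht : Convex ℝ t) (hfx : f x ∈ t)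
    (hst : ∀ᶠ y in 𝓝[s] x, f y ∈ t) (hcl : IsClosed (feasibleCone ht hfx : Set F)) :
    (feasibleCone hs hx).lineal.map (f' : E →ₗ[ℝ] F) ≤ (feasibleCone ht hfx).lineal := by
  rintro _ ⟨v, hv, rfl⟩
  obtain ⟨hv₁, hv₂⟩ := PointedCone.mem_lineal.1 hv
  refine PointedCone.mem_lineal.2 ⟨hf.mem_feasibleCone hs hx ht hfx hst hcl hv₁, ?_⟩
  rw [ContinuousLinearMap.coe_coe, ← map_neg]
  exact hf.mem_feasibleCone hs hx ht hfx hst hcl hv₂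

theorem HasFDerivWithinAt.leftInverse_of_leftInvOn {g : F → E} {g' : F →L[ℝ] E}
    (hg : HasFDerivWithinAt g g' t (f x)) (hf : HasFDerivWithinAt f f' s x) (hst : MapsTo f s t)
    (hinv : LeftInvOn g f s) (hx : x ∈ s) (hs : UniqueDiffWithinAt ℝ s x) :
    Function.LeftInverse g' f' := fun v =>
  DFunLike.congr_fun (hs.eq ((hg.comp x hf hst).congr (fun _ hy => (hinv hy).symm) (hinv hx).symm)
    (hasFDerivWithinAt_id x s)) v

/-- Mathlib's extension lemma applies on the convex open set `interior P ∩ ball x (ε / 2)`, whose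
closure is a neighbourhood of `x` within `P`. -/
theorem Convex.hasFDerivWithinAt_of_hasFDerivAt_interior {P O : Set E} (hP : Convex ℝ P)
    (hPcl : IsClosed P) (hPi : (interior P).Nonempty) (hO : IsOpen O) {f : E → F}
    {f' : E → E →L[ℝ] F} (hf : ContinuousOn f (P ∩ O)) (hf' : ContinuousOn f' (P ∩ O))
    (hd : ∀ y ∈ interior (P ∩ O), HasFDerivAt f (f' y) y) (hx : x ∈ P ∩ O) :
    HasFDerivWithinAt f (f' x) P x := by
  obtain ⟨ε, hε, hball⟩ := Metric.isOpen_iff.1 hO x hx.2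
  set s := interior P ∩ Metric.ball x (ε / 2)
  have hs_open : IsOpen s := isOpen_interior.inter Metric.isOpen_ball
  have hclosure : closure s ⊆ P ∩ O := by
    refine (closure_inter_subset_inter_closure _ _).trans (inter_subset_inter ?_ ?_)
    · exact closure_minimal interior_subset hPcl
    · exact Metric.closure_ball_subset_closedBall.trans
        ((Metric.closedBall_subset_ball (by linarith)).trans hball)
  have hs_sub : s ⊆ P ∩ O := subset_closure.trans hclosure
  have hs_int : s ⊆ interior (P ∩ O) := interior_maximal hs_sub hs_open
  have hlim : HasFDerivWithinAt f (f' x) (closure s) x := by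
    refine hasFDerivWithinAt_closure_of_tendsto_fderiv
      (fun y hy => (hd y (hs_int hy)).differentiableAt.differentiableWithinAt)
      (hP.interior.inter (convex_ball x _)) hs_open
      (fun y hy => (hf y (hclosure hy)).mono hs_sub) ?_
    refine ((hf' x hx).mono_left (nhdsWithin_mono x hs_sub)).congr' ?_
    filter_upwards [self_mem_nhdsWithin] with y hy
    exact (hd y (hs_int hy)).fderiv.symm
  have hnhds : P ∩ Metric.ball x (ε / 2) ⊆ closure s := by
    calc P ∩ Metric.ball x (ε / 2) ⊆ Metric.ball x (ε / 2) ∩ closure (interior P) := by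
          rw [inter_comm, hP.closure_interior_eq_closure_of_nonempty_interior hPi]
          exact inter_subset_inter_right _ subset_closure
      _ ⊆ closure s :=
          Metric.isOpen_ball.inter_closure.trans (closure_mono (inter_comm _ _).subset)
  exact (hasFDerivWithinAt_inter (Metric.ball_mem_nhds x (by linarith))).1 (hlim.mono hnhds)

end Differential

theorem Submodule.map_eq_of_map_le_of_map_le {R M N : Type*} [Semiring R] [AddCommMonoid M]
    [AddCommMonoid N] [Module R M] [Module R N] {f : M →ₗ[R] N} {g : N →ₗ[R] M}
    (hfg : Function.LeftInverse f g) {p : Submodule R M} {q : Submodule R N}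
    (hf : p.map f ≤ q) (hg : q.map g ≤ p) : p.map f = q :=
  hf.antisymm fun y hy => ⟨g y, hg ⟨y, hy, rfl⟩, hfg y⟩

section Polytope

variable {n : ℕ} {M N : Set (Fin n → ℝ)} {x : Fin n → ℝ}

theorem isFaceOf_setOf_sub_mem_feasibleCone (hM : Convex ℝ M) (hx : x ∈ M) :
    IsFaceOf n M {y ∈ M | x - y ∈ feasibleCone hM hx} := by
  refine ⟨?_, sep_subset _ _, ?_⟩
  · rintro y₁ ⟨hy₁, hxy₁⟩ y₂ ⟨hy₂, hxy₂⟩ a b ha hb hab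
    refine ⟨hM hy₁ hy₂ ha hb hab, ?_⟩
    have key : x - (a • y₁ + b • y₂) = a • (x - y₁) + b • (x - y₂) := by
      obtain rfl : b = 1 - a := by linarith
      module
    rw [key]
    exact add_mem (PointedCone.smul_mem _ ha hxy₁) (PointedCone.smul_mem _ hb hxy₂)
  · rintro u hu w hw y ⟨-, hxy⟩ hseg
    exact ⟨hu, sub_mem_feasibleCone_of_mem_openSegment hM hx hw hxy hseg⟩

theorem setOf_sub_mem_feasibleCone_subset_of_isFaceOf (hM : Convex ℝ M) (hx : x ∈ M)
    {F : Set (Fin n → ℝ)} (hF : IsFaceOf n M F) (hxF : x ∈ F) :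
    {y ∈ M | x - y ∈ feasibleCone hM hx} ⊆ F := by
  rintro y ⟨hy, t, ht, hyt⟩
  refine hF.2.left_mem_of_mem_openSegment hy hyt hxF ⟨t / (1 + t), 1 / (1 + t), by positivity,
    by positivity, by field_simp; ring, ?_⟩
  match_scalars <;> field_simp
  ring

theorem smallestFace_eq (hM : Convex ℝ M) (hx : x ∈ M) :
    smallestFace n M x = {y ∈ M | x - y ∈ feasibleCone hM hx} :=
  Subset.antisymm (sInter_subset_of_mem ⟨isFaceOf_setOf_sub_mem_feasibleCone hM hx, hx, by simp⟩)
    (subset_sInter fun _ hF => setOf_sub_mem_feasibleCone_subset_of_isFaceOf hM hx hF.1 hF.2)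

theorem spanAt_eq_lineal_feasibleCone (hM : Convex ℝ M) (hx : x ∈ M) :
    spanAt n M x = (feasibleCone hM hx).lineal := by
  rw [spanAt, smallestFace_eq hM hx]
  apply le_antisymm
  · rw [Submodule.span_le]
    rintro _ ⟨y, ⟨hy, hxy⟩, rfl⟩
    exact PointedCone.mem_lineal.2 ⟨sub_mem_feasibleCone hM hx hy, by rwa [neg_sub]⟩
  · intro v hv
    obtain ⟨⟨t, ht, htv⟩, hneg⟩ := PointedCone.mem_lineal.1 hv
    have hxt : x - (x + t • v) ∈ feasibleCone hM hx := by
      rw [sub_add_cancel_left, ← smul_neg]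
      exact PointedCone.smul_mem _ ht.le hneg
    have hv' : v = t⁻¹ • ((x + t • v) - x) := by
      rw [add_sub_cancel_left, inv_smul_smul₀ ht.ne']
    rw [hv']
    exact Submodule.smul_mem _ _ (Submodule.subset_span ⟨_, ⟨htv, hxt⟩, rfl⟩)

theorem IsPolytope.convex (hM : IsPolytope n M) : Convex ℝ M := by
  obtain ⟨S, rfl⟩ := hM
  exact convex_convexHull ℝ _

theorem IsPolytope.isClosed (hM : IsPolytope n M) : IsClosed M := by
  obtain ⟨S, rfl⟩ := hM
  exact (S.finite_toSet.isCompact_convexHull (𝕜 := ℝ)).isClosed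

theorem IsPolytope.isClosed_feasibleCone (hM : IsPolytope n M) (hx : x ∈ M) :
    IsClosed (feasibleCone hM.convex hx : Set (Fin n → ℝ)) := by
  obtain ⟨S, rfl⟩ := id hM
  exact isClosed_feasibleCone_convexHull hx

theorem IsPolytope.map_spanAt_le (hM : IsPolytope n M) (hN : IsPolytope n N) {O : Set (Fin n → ℝ)}
    (hO : IsOpen O) {f : (Fin n → ℝ) → (Fin n → ℝ)} {f' : (Fin n → ℝ) →L[ℝ] (Fin n → ℝ)}
    (hf : HasFDerivWithinAt f f' M x) (hx : x ∈ M ∩ O) (hmaps : MapsTo f (M ∩ O) N) :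
    (spanAt n M x).map (f' : (Fin n → ℝ) →ₗ[ℝ] (Fin n → ℝ)) ≤ spanAt n N (f x) := by
  rw [spanAt_eq_lineal_feasibleCone hM.convex hx.1,
    spanAt_eq_lineal_feasibleCone hN.convex (hmaps hx)]
  refine hf.map_lineal_feasibleCone_le hM.convex hx.1 hN.convex (hmaps hx) ?_
    (hN.isClosed_feasibleCone _)
  filter_upwards [inter_mem_nhdsWithin M (hO.mem_nhds hx.2)] with y hy using hmaps hy

theorem IsPolytope.uniqueDiffWithinAt (hM : IsPolytope n M) (hMi : (interior M).Nonempty)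
    {O : Set (Fin n → ℝ)} (hO : IsOpen O) (hx : x ∈ M ∩ O) : UniqueDiffWithinAt ℝ (M ∩ O) x :=
  (uniqueDiffWithinAt_convex hM.convex hMi (subset_closure hx.1)).inter (hO.mem_nhds hx.2)

end Polytope

/-- Let `M, N ⊆ ℝⁿ` be convex polytopes with nonempty interior and
`φ : U → V` a `C¹`-diffeomorphism between relatively open subsets `U ⊆ M`, `V ⊆ N`.
Then `φ'(x)(E(x)) = F(φ(x))` for each `x ∈ U`; in particular
`dim E(x) = dim F(φ(x))`. -/
theorem diffeomorphism_maps_face_span_onto_face_span {n : ℕ}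
    (M N U V : Set (Fin n → ℝ))
    (hM : IsPolytope n M) (hMi : (interior M).Nonempty)
    (hN : IsPolytope n N) (hNi : (interior N).Nonempty)
    (hU : ∃ O : Set (Fin n → ℝ), IsOpen O ∧ U = M ∩ O)
    (hV : ∃ O : Set (Fin n → ℝ), IsOpen O ∧ V = N ∩ O)
    (φ ψ : (Fin n → ℝ) → (Fin n → ℝ))
    (φ' ψ' : (Fin n → ℝ) → ((Fin n → ℝ) →L[ℝ] (Fin n → ℝ)))
    (hbij : Set.BijOn φ U V) (hinv : Set.InvOn ψ φ U V)
    (hcont : ContinuousOn φ U) (hcont' : ContinuousOn φ' U)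
    (hderiv : ∀ x ∈ interior U, HasFDerivAt φ (φ' x) x)
    (hcontinv : ContinuousOn ψ V) (hcontinv' : ContinuousOn ψ' V)
    (hderivinv : ∀ y ∈ interior V, HasFDerivAt ψ (ψ' y) y) :
    ∀ x ∈ U, (spanAt n M x).map (φ' x : (Fin n → ℝ) →ₗ[ℝ] (Fin n → ℝ)) = spanAt n N (φ x) ∧
      Module.finrank ℝ (spanAt n M x) = Module.finrank ℝ (spanAt n N (φ x)) := by
  obtain ⟨O, hO, rfl⟩ := hU
  obtain ⟨O', hO', rfl⟩ := hV
  intro x hx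
  have hy : φ x ∈ N ∩ O' := hbij.mapsTo hx
  have hψφ : ψ (φ x) = x := hinv.1 hx
  have hψ_maps : MapsTo ψ (N ∩ O') (M ∩ O) := hinv.1.mapsTo hbij.surjOn
  have hφ := hM.convex.hasFDerivWithinAt_of_hasFDerivAt_interior hM.isClosed hMi hO hcont hcont'
    hderiv hx
  have hψ := hN.convex.hasFDerivWithinAt_of_hasFDerivAt_interior hN.isClosed hNi hO' hcontinv
    hcontinv' hderivinv hy
  have hφ_at : HasFDerivWithinAt φ (φ' x) (M ∩ O) (ψ (φ x)) := by
    rw [hψφ]; exact hφ.mono inter_subset_left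
  have hleft : Function.LeftInverse (ψ' (φ x)) (φ' x) :=
    (hψ.mono inter_subset_left).leftInverse_of_leftInvOn (hφ.mono inter_subset_left)
      hbij.mapsTo hinv.1 hx (hM.uniqueDiffWithinAt hMi hO hx)
  have hright : Function.LeftInverse (φ' x) (ψ' (φ x)) :=
    hφ_at.leftInverse_of_leftInvOn (hψ.mono inter_subset_left) hψ_maps hinv.2 hy
      (hN.uniqueDiffWithinAt hNi hO' hy)
  have hle₁ := hM.map_spanAt_le hN hO hφ hx (hbij.mapsTo.mono_right inter_subset_left)
  have hle₂ := hN.map_spanAt_le hM hO' hψ hy (hψ_maps.mono_right inter_subset_left)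
  rw [hψφ] at hle₂
  have hmap := Submodule.map_eq_of_map_le_of_map_le hright hle₁ hle₂
  refine ⟨hmap, ?_⟩
  rw [← hmap]
  exact (Submodule.equivMapOfInjective _ hleft.injective _).finrank_eq
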